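/- Consider a single arc as in the context, and assume in addition that there is ν⁺ ≥ ε with f⁺(θ) ≤ ν⁺ for all θ, so that q is Lipschitz continuous and hence differentiable almost everywhere. Then for almost all θ ≥ 0: q'(θ) = f⁺(θ)/f⁻(T(θ)) − 1 if f⁻(T(θ)) > 0; q'(θ) = −1 if f⁻(T(θ)) = 0 and z(θ + τ) > 0; and q'(θ) = 0 if f⁻(T(θ)) = 0 and z(θ + τ) = 0. -/

import Mathlib

open MeasureTheory
open scoped Classical

noncomputable section

/-- Cumulative flow `F(θ) = ∫₀^θ f` (which vanishes for `θ < 0` whenever `f`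
vanishes on negatives). -/
def Fcum (f : ℝ → ℝ) (θ : ℝ) : ℝ := ∫ ξ in (0:ℝ)..θ, f ξ

/-- The queue `z(θ) = F⁺(θ − τ) − F⁻(θ)`. -/
def queueLen (τ : ℝ) (fplus fminus : ℝ → ℝ) (θ : ℝ) : ℝ :=
  Fcum fplus (θ - τ) - Fcum fminus θ

/-- A single arc of a feasible flow over time: transit time `τ ≥ 0`, outflow
capacity `ν > 0`, inflow rate `fplus` and outflow rate `fminus` (locally integrable,
bounded, nonnegative, vanishing on negative times) with `fminus ≤ ν`, nonnegative
queues, and a lower bound `ε > 0` for the outflow rate whenever the queue is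
positive (so that the waiting time is well-defined). -/
structure Arc where
  τ : ℝ
  ν : ℝ
  ε : ℝ
  fplus : ℝ → ℝ
  fminus : ℝ → ℝ
  τ_nonneg : 0 ≤ τ
  ν_pos : 0 < ν
  ε_pos : 0 < ε
  fplus_nonneg : ∀ θ, 0 ≤ fplus θ
  fminus_nonneg : ∀ θ, 0 ≤ fminus θ
  fplus_zero_neg : ∀ θ, θ < 0 → fplus θ = 0
  fminus_zero_neg : ∀ θ, θ < 0 → fminus θ = 0
  fplus_bdd : ∃ M, ∀ θ, fplus θ ≤ M
  fplus_li : LocallyIntegrable fplus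
  fminus_li : LocallyIntegrable fminus
  fminus_le_cap : ∀ θ, fminus θ ≤ ν
  queue_nonneg : ∀ θ, 0 ≤ θ → 0 ≤ queueLen τ fplus fminus θ
  outflow_lb : ∀ θ, 0 < queueLen τ fplus fminus θ → ε ≤ fminus θ

namespace Arc

/-- Cumulative inflow `F⁺`. -/
def Fplus (A : Arc) (θ : ℝ) : ℝ := Fcum A.fplus θ

/-- Cumulative outflow `F⁻`. -/
def Fminus (A : Arc) (θ : ℝ) : ℝ := Fcum A.fminus θ

/-- The queue `z`. -/
def z (A : Arc) (θ : ℝ) : ℝ := queueLen A.τ A.fplus A.fminus θ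

/-- The waiting time `q(θ)`. -/
def q (A : Arc) (θ : ℝ) : ℝ :=
  sInf {q : ℝ | 0 ≤ q ∧
    (∫ ξ in (θ + A.τ)..(θ + A.τ + q), A.fminus ξ) = A.z (θ + A.τ)}

/-- The exit time `T(θ) = θ + τ + q(θ)`. -/
def T (A : Arc) (θ : ℝ) : ℝ := θ + A.τ + A.q θ

end Arc

end

/-!
Particles leave the arc in FIFO order, so the exit time `T = θ + τ + q` is monotone, and it is
characterised by `F⁻(T θ) = F⁺(θ)`. A monotone `T` is differentiable almost everywhere, and by
the area formula `∫ₛ T' = |T(s)|` its derivative vanishes almost everywhere on the preimage of a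
null set. So at almost every `θ` either `F⁻` has derivative `f⁻` at `T θ` or `T'(θ) = 0`; as `F⁻`
is Lipschitz, the chain rule `f⁺(θ) = f⁻(T θ) T'(θ)` holds in both cases. This is the first case.
If `f⁻(T θ) = 0`, the queue is empty at `T θ` (the outflow rate is at least `ε` while it is not);
then nobody enters during `[θ, θ + q θ]`, so `T` is constant there and `T' = 0` when `q θ > 0`,
while `q θ = 0` makes `θ` a minimum of `q ≥ 0`.
-/

open Set Filter

theorem MeasureTheory.LocallyIntegrable.intervalIntegrable {f : ℝ → ℝ} (hf : LocallyIntegrable f)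
    (a b : ℝ) : IntervalIntegrable f volume a b :=
  (hf.integrableOn_isCompact isCompact_uIcc).intervalIntegrable

theorem HasDerivAt.eq_zero_of_eqOn_Icc {E : Type*} [NormedAddCommGroup E] [NormedSpace ℝ E]
    {f : ℝ → E} {d : E} {x y : ℝ} (hf : HasDerivAt f d x) (hxy : x < y)
    (hconst : ∀ u ∈ Icc x y, f u = f x) : d = 0 :=
  (uniqueDiffOn_Icc hxy x ⟨le_rfl, hxy.le⟩).eq_deriv _ hf.hasDerivWithinAt
    ((hasDerivWithinAt_const x _ (f x)).congr hconst (hconst x ⟨le_rfl, hxy.le⟩))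

theorem LipschitzWith.hasDerivAt_comp_zero {g f : ℝ → ℝ} {K : NNReal} (hg : LipschitzWith K g)
    {x : ℝ} (hf : HasDerivAt f 0 x) : HasDerivAt (fun y => g (f y)) 0 x := by
  rw [hasDerivAt_iff_isLittleO] at hf ⊢
  simp only [smul_zero, sub_zero] at hf ⊢
  refine (Asymptotics.IsBigO.of_bound K (Eventually.of_forall fun y => ?_)).trans_isLittleO hf
  simpa only [Real.norm_eq_abs, ← Real.dist_eq] using hg.dist_le_mul (f y) (f x)

theorem Monotone.ae_deriv_eq_zero_of_mem_null {T : ℝ → ℝ} (hT : Monotone T) {N : Set ℝ}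
    (hN : volume N = 0) : ∀ᵐ θ, T θ ∈ N → deriv T θ = 0 := by
  set s := {θ | DifferentiableAt ℝ T θ} ∩ T ⁻¹' toMeasurable volume N
  have hs : MeasurableSet s :=
    (measurableSet_of_differentiableAt ℝ T).inter
      (hT.measurable (measurableSet_toMeasurable _ _))
  have hint : ∫⁻ θ in s, ENNReal.ofReal (deriv T θ) = 0 := by
    rw [lintegral_deriv_eq_volume_image_of_monotoneOn hs
      (fun θ hθ => hθ.1.hasDerivAt.hasDerivWithinAt) (hT.monotoneOn s)]
    exact measure_mono_null (image_preimage_subset _ _ |>.trans' (image_mono inter_subset_right))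
      (by rwa [measure_toMeasurable])
  filter_upwards [(setLIntegral_eq_zero_iff hs (measurable_deriv T).ennreal_ofReal).1 hint]
    with θ hθ hTθ
  by_cases hd : DifferentiableAt ℝ T θ
  · exact le_antisymm (ENNReal.ofReal_eq_zero.1 (hθ ⟨hd, subset_toMeasurable _ _ hTθ⟩))
      hT.deriv_nonneg
  · exact deriv_zero_of_not_differentiableAt hd

theorem Monotone.ae_hasDerivAt_comp {F f T : ℝ → ℝ} {K : NNReal} (hT : Monotone T)
    (hF : LipschitzWith K F) (hFf : ∀ᵐ t, HasDerivAt F (f t) t) :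
    ∀ᵐ θ, ∀ d, HasDerivAt T d θ → HasDerivAt (fun x => F (T x)) (f (T θ) * d) θ := by
  filter_upwards [hT.ae_deriv_eq_zero_of_mem_null (ae_iff.1 hFf)] with θ hθ d hd
  by_cases hTθ : HasDerivAt F (f (T θ)) (T θ)
  · exact hTθ.comp θ hd
  · obtain rfl : d = 0 := hd.deriv ▸ hθ hTθ
    simpa using hF.hasDerivAt_comp_zero hd

section Fcum

variable {f : ℝ → ℝ}

theorem Fcum_sub_Fcum (hf : LocallyIntegrable f) (a b : ℝ) :
    Fcum f b - Fcum f a = ∫ x in a..b, f x :=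
  intervalIntegral.integral_interval_sub_left (hf.intervalIntegrable 0 b)
    (hf.intervalIntegrable 0 a)

theorem continuous_Fcum (hf : LocallyIntegrable f) : Continuous (Fcum f) :=
  intervalIntegral.continuous_primitive hf.intervalIntegrable 0

theorem monotone_Fcum (hf : LocallyIntegrable f) (h0 : ∀ x, 0 ≤ f x) : Monotone (Fcum f) :=
  fun a b hab => sub_nonneg.1 <| (Fcum_sub_Fcum hf a b).symm ▸
    intervalIntegral.integral_nonneg hab fun x _ => h0 x

theorem lipschitzWith_Fcum (hf : LocallyIntegrable f) {M : NNReal} (hM : ∀ x, ‖f x‖ ≤ M) :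
    LipschitzWith M (Fcum f) := by
  refine LipschitzWith.of_dist_le_mul fun a b => ?_
  rw [Real.dist_eq, Fcum_sub_Fcum hf b a, ← Real.norm_eq_abs, Real.dist_eq]
  exact intervalIntegral.norm_integral_le_of_norm_le_const fun x _ => hM x

theorem Fcum_eq_zero_of_nonpos (hneg : ∀ x < 0, f x = 0) {a : ℝ} (ha : a ≤ 0) :
    Fcum f a = 0 := by
  refine intervalIntegral.integral_zero_ae ?_
  filter_upwards [compl_mem_ae_iff.2 (measure_singleton (0 : ℝ))] with x hx0 hx
  rw [uIoc_of_ge ha] at hx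
  exact hneg x (hx.2.lt_of_ne hx0)

theorem Fcum_nonneg (h0 : ∀ x, 0 ≤ f x) (hneg : ∀ x < 0, f x = 0) (a : ℝ) : 0 ≤ Fcum f a := by
  rcases le_total a 0 with ha | ha
  · exact (Fcum_eq_zero_of_nonpos hneg ha).ge
  · exact intervalIntegral.integral_nonneg ha fun x _ => h0 x

end Fcum

namespace Arc

variable (A : Arc) {θ : ℝ}

def waitSet (θ : ℝ) : Set ℝ :=
  {s | 0 ≤ s ∧ Fcum A.fminus (θ + A.τ + s) = Fcum A.fplus θ}

theorem z_add_τ (θ : ℝ) : A.z (θ + A.τ) = Fcum A.fplus θ - Fcum A.fminus (θ + A.τ) := by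
  simp only [z, queueLen, add_sub_cancel_right]

theorem z_add_τ_nonneg (hθ : 0 ≤ θ) : 0 ≤ A.z (θ + A.τ) :=
  A.queue_nonneg _ (add_nonneg hθ A.τ_nonneg)

theorem q_eq_sInf_waitSet (θ : ℝ) : A.q θ = sInf (A.waitSet θ) := by
  refine congrArg sInf (ext fun s => and_congr_right fun _ => ?_)
  rw [← Fcum_sub_Fcum A.fminus_li, z_add_τ, sub_left_inj]

theorem q_nonneg (θ : ℝ) : 0 ≤ A.q θ :=
  A.q_eq_sInf_waitSet θ ▸ Real.sInf_nonneg fun _ hs => hs.1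

theorem q_le {s : ℝ} (hs : s ∈ A.waitSet θ) : A.q θ ≤ s :=
  A.q_eq_sInf_waitSet θ ▸ csInf_le ⟨0, fun _ hu => hu.1⟩ hs

theorem ε_le_fminus_of_Fcum_lt {t : ℝ} (ht : θ + A.τ ≤ t)
    (hlt : Fcum A.fminus t < Fcum A.fplus θ) : A.ε ≤ A.fminus t := by
  refine A.outflow_lb t (sub_pos.2 (hlt.trans_le ?_))
  exact monotone_Fcum A.fplus_li A.fplus_nonneg (by linarith)

/-- Once a queue has built up, it is served at rate at least `ε`, so after `z / ε + 1` time
units the whole of it has left. -/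
theorem waitSet_nonempty (hθ : 0 ≤ θ) : (A.waitSet θ).Nonempty := by
  have hz := A.z_add_τ_nonneg hθ
  set s₀ := A.z (θ + A.τ) / A.ε + 1 with hs₀_def
  have hs₀ : 0 ≤ s₀ := by have := A.ε_pos; positivity
  have hstart : Fcum A.fminus (θ + A.τ + 0) ≤ Fcum A.fplus θ := by
    rw [add_zero, ← sub_nonneg, ← z_add_τ]; exact hz
  have hend : Fcum A.fplus θ ≤ Fcum A.fminus (θ + A.τ + s₀) := by
    by_contra! hlt
    have hlb : ∀ t ∈ Icc (θ + A.τ) (θ + A.τ + s₀), A.ε ≤ A.fminus t := fun t ht =>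
      A.ε_le_fminus_of_Fcum_lt ht.1
        ((monotone_Fcum A.fminus_li A.fminus_nonneg ht.2).trans_lt hlt)
    have hserved : A.ε * s₀ ≤ Fcum A.fminus (θ + A.τ + s₀) - Fcum A.fminus (θ + A.τ) := by
      rw [Fcum_sub_Fcum A.fminus_li]
      simpa [mul_comm] using intervalIntegral.integral_mono_on (by linarith)
        intervalIntegrable_const (A.fminus_li.intervalIntegrable _ _) hlb
    have : A.ε * s₀ = A.z (θ + A.τ) + A.ε := by rw [hs₀_def]; field_simp [A.ε_pos.ne']
    linarith [A.z_add_τ θ, A.ε_pos]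
  obtain ⟨s, hs, hFs⟩ := intermediate_value_Icc hs₀
    ((continuous_Fcum A.fminus_li).comp (continuous_const.add continuous_id)).continuousOn
    ⟨hstart, hend⟩
  exact ⟨s, hs.1, hFs⟩

theorem q_mem_waitSet (hθ : 0 ≤ θ) : A.q θ ∈ A.waitSet θ := by
  rw [q_eq_sInf_waitSet]
  refine IsClosed.csInf_mem ?_ (A.waitSet_nonempty hθ) ⟨0, fun _ hu => hu.1⟩
  exact isClosed_Ici.inter (isClosed_eq
    ((continuous_Fcum A.fminus_li).comp (continuous_const.add continuous_id)) continuous_const)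

theorem Fcum_fminus_T (hθ : 0 ≤ θ) : Fcum A.fminus (A.T θ) = Fcum A.fplus θ :=
  (A.q_mem_waitSet hθ).2

theorem Fcum_fminus_lt_of_lt_T (hθ : 0 ≤ θ) {t : ℝ} (ht : θ + A.τ ≤ t) (htT : t < A.T θ) :
    Fcum A.fminus t < Fcum A.fplus θ := by
  refine (A.Fcum_fminus_T hθ ▸ monotone_Fcum A.fminus_li A.fminus_nonneg htT.le).lt_of_ne
    fun heq => ?_
  have := A.q_le (s := t - (θ + A.τ)) ⟨by linarith, by rwa [add_sub_cancel]⟩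
  exact htT.not_ge (by unfold T; linarith)

/-- Before time `0` nothing has entered; then `q = 0` either because `0` is feasible or, as a
junk value, because `waitSet` is empty. -/
theorem q_eq_zero_of_nonpos (hθ : θ ≤ 0) : A.q θ = 0 := by
  have hFplus : Fcum A.fplus θ = 0 := Fcum_eq_zero_of_nonpos A.fplus_zero_neg hθ
  rcases (A.waitSet θ).eq_empty_or_nonempty with hempty | ⟨s, hs, hFs⟩
  · rw [q_eq_sInf_waitSet, hempty, Real.sInf_empty]
  · refine le_antisymm (A.q_le ⟨le_rfl, ?_⟩) (A.q_nonneg θ)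
    refine le_antisymm ?_ (hFplus ▸ Fcum_nonneg A.fminus_nonneg A.fminus_zero_neg _)
    exact hFs ▸ monotone_Fcum A.fminus_li A.fminus_nonneg (by linarith)

theorem monotone_T : Monotone A.T := by
  intro a b hab
  rcases le_total a 0 with ha | ha
  · have := A.q_nonneg b
    simp only [T, A.q_eq_zero_of_nonpos ha]
    linarith
  · by_contra! hlt
    have := A.Fcum_fminus_lt_of_lt_T ha (by unfold T; linarith [A.q_nonneg b]) hlt
    rw [A.Fcum_fminus_T (ha.trans hab)] at this
    exact this.not_ge (monotone_Fcum A.fplus_li A.fplus_nonneg hab)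

/-- If the queue is empty when the particle entering at `θ` leaves, nothing enters during its
wait, so everyone entering then leaves together with it. -/
theorem T_eq_of_mem_Icc (hθ : 0 ≤ θ) (hz : A.z (A.T θ) = 0) {x : ℝ}
    (hx : x ∈ Icc θ (θ + A.q θ)) : A.T x = A.T θ := by
  have hFplus : Fcum A.fplus (θ + A.q θ) = Fcum A.fplus θ := by
    have : A.T θ - A.τ = θ + A.q θ := by unfold T; ring
    rw [z, queueLen, this, A.Fcum_fminus_T hθ, sub_eq_zero] at hz
    exact hz
  have hFx : Fcum A.fplus x = Fcum A.fplus θ :=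
    le_antisymm (hFplus ▸ monotone_Fcum A.fplus_li A.fplus_nonneg hx.2)
      (monotone_Fcum A.fplus_li A.fplus_nonneg hx.1)
  refine le_antisymm ?_ (A.monotone_T hx.1)
  have := A.q_le (θ := x) (s := A.T θ - A.τ - x)
    ⟨by unfold T; linarith [hx.2], by rw [hFx, ← A.Fcum_fminus_T hθ]; ring_nf⟩
  unfold T at this ⊢
  linarith

theorem q_eq_zero_iff (hθ : 0 ≤ θ) : A.q θ = 0 ↔ A.z (θ + A.τ) = 0 := by
  rw [z_add_τ, sub_eq_zero]
  constructor
  · intro hq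
    simpa [T, hq] using (A.Fcum_fminus_T hθ).symm
  · intro hz
    exact le_antisymm (A.q_le ⟨le_rfl, by rw [add_zero, hz]⟩) (A.q_nonneg θ)

theorem z_T_eq_zero_of_fminus_T_eq_zero (hθ : 0 ≤ θ) (h : A.fminus (A.T θ) = 0) :
    A.z (A.T θ) = 0 := by
  have hTθ : 0 ≤ A.T θ := by unfold T; linarith [A.τ_nonneg, A.q_nonneg θ]
  refine le_antisymm (not_lt.1 fun hpos => ?_) (A.queue_nonneg _ hTθ)
  linarith [A.outflow_lb _ hpos, A.ε_pos]

theorem lipschitzWith_Fcum_fminus : LipschitzWith A.ν.toNNReal (Fcum A.fminus) :=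
  lipschitzWith_Fcum A.fminus_li fun t => by
    rw [Real.norm_of_nonneg (A.fminus_nonneg t)]
    exact (A.fminus_le_cap t).trans (Real.le_coe_toNNReal _)

end Arc

theorem arc_wait_deriv_general (A : Arc) :
    ∀ᵐ θ ∂(volume : Measure ℝ), 0 ≤ θ →
      HasDerivAt A.q
        (if 0 < A.fminus (A.T θ) then A.fplus θ / A.fminus (A.T θ) - 1
         else if 0 < A.z (θ + A.τ) then -1 else 0) θ := by
  filter_upwards [A.monotone_T.ae_differentiableAt,
    LocallyIntegrable.ae_hasDerivAt_integral A.fplus_li,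
    A.monotone_T.ae_hasDerivAt_comp A.lipschitzWith_Fcum_fminus
      ((LocallyIntegrable.ae_hasDerivAt_integral A.fminus_li).mono fun t ht => ht 0),
    compl_mem_ae_iff.2 (measure_singleton 0)] with θ hTd hFplus hFminusT hθ0 hθ
  replace hθ : 0 < θ := hθ.lt_of_ne' hθ0
  set D := deriv A.T θ
  have hT : HasDerivAt A.T D θ := hTd.hasDerivAt
  have hq : HasDerivAt A.q (D - 1) θ := by
    have hqT : A.q = fun x => A.T x - x - A.τ := funext fun x => by unfold Arc.T; ring
    exact hqT ▸ (hT.sub (hasDerivAt_id' θ)).sub_const A.τ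
  have hflow : A.fplus θ = A.fminus (A.T θ) * D := by
    refine (hFplus 0).unique ((hFminusT D hT).congr_of_eventuallyEq ?_)
    filter_upwards [lt_mem_nhds hθ] with x hx using (A.Fcum_fminus_T hx.le).symm
  convert hq using 1
  split_ifs with hm hz
  · field_simp; linarith
  · have hq0 : 0 < A.q θ := (A.q_nonneg θ).lt_of_ne' ((A.q_eq_zero_iff hθ.le).not.2 hz.ne')
    have hzT := A.z_T_eq_zero_of_fminus_T_eq_zero hθ.le
      (le_antisymm (not_lt.1 hm) (A.fminus_nonneg _))
    have : D = 0 :=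
      hT.eq_zero_of_eqOn_Icc (by linarith) fun u hu => A.T_eq_of_mem_Icc hθ.le hzT hu
    linarith
  · have hq0 : A.q θ = 0 :=
      (A.q_eq_zero_iff hθ.le).2 (le_antisymm (not_lt.1 hz) (A.z_add_τ_nonneg hθ.le))
    have := IsLocalMin.hasDerivAt_eq_zero
      (Eventually.of_forall fun x => hq0 ▸ A.q_nonneg x) hq
    linarith

/-- **Derivative of the waiting time.** For a single arc of a feasible flow over
time whose inflow rate is bounded by `ν⁺ ≥ ε` (so that `q` is Lipschitz and hence
differentiable almost everywhere), for almost all `θ ≥ 0` the waiting time has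
derivative `f⁺(θ)/f⁻(T(θ)) − 1` if `f⁻(T(θ)) > 0`, derivative `−1` if
`f⁻(T(θ)) = 0` and `z(θ + τ) > 0`, and derivative `0` otherwise. -/
theorem arc_wait_deriv (A : Arc) (νplus : ℝ)
    (hνε : A.ε ≤ νplus) (hcap : ∀ θ, A.fplus θ ≤ νplus) :
    ∀ᵐ θ ∂(volume : Measure ℝ), 0 ≤ θ →
      HasDerivAt A.q
        (if 0 < A.fminus (A.T θ) then A.fplus θ / A.fminus (A.T θ) - 1
         else if 0 < A.z (θ + A.τ) then -1 else 0) θ :=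
  arc_wait_deriv_general A
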